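/- arXiv:1702.08023 — 8 statements merged into one kernel-verified Lean document; each statement's English description precedes it below -/
import Mathlib

section
/- Let 𝓕 be a lattice of subsets of a set E. Then the union over all n ≥ 0 of the classes Bₙ(𝓕) equals the Boolean closure of 𝓕, i.e., the smallest collection of subsets of E containing 𝓕 that is closed under complementation, finite unions and finite intersections. -/
/-- The alternating difference `(X₁ ∖ X₂) ∪ (X₃ ∖ X₄) ∪ ⋯` of a (decreasing,
eventually empty) chain of sets, indexed from `0` (so `X i` is `X_{i+1}`). -/
def altDiff {E : Type*} (X : ℕ → Set E) : Set E :=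
  ⋃ k, X (2 * k) \ X (2 * k + 1)

/-- The `n`-th level `Bₙ(𝓕)` of the difference hierarchy over `𝓕`:
sets of the form `X₁ - X₂ + ⋯ ± Xₙ` with `X₁ ⊇ ⋯ ⊇ Xₙ` in `𝓕` (and `X_{n+1} = ∅`). -/
def diffHier {E : Type*} (F : Set (Set E)) (n : ℕ) : Set (Set E) :=
  {S | ∃ X : ℕ → Set E, (∀ i, i < n → X i ∈ F) ∧ (∀ i, n ≤ i → X i = ∅) ∧
    (∀ i j, i ≤ j → X j ⊆ X i) ∧ S = altDiff X}

/-- The Boolean closure of `𝓕`: the smallest collection of subsets of `E`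
containing `𝓕` and closed under complementation, finite unions and finite
intersections. -/
inductive BoolClosure {E : Type*} (F : Set (Set E)) : Set E → Prop
  | base {X : Set E} : X ∈ F → BoolClosure F X
  | compl {X : Set E} : BoolClosure F X → BoolClosure F Xᶜ
  | union {X Y : Set E} : BoolClosure F X → BoolClosure F Y → BoolClosure F (X ∪ Y)
  | inter {X Y : Set E} : BoolClosure F X → BoolClosure F Y → BoolClosure F (X ∩ Y)

/-!
A chain `X₀ ⊇ X₁ ⊇ ⋯ ⊇ Xₙ = ∅` is the same thing as a bounded rank `ρ : E → ℕ` with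
`Xₖ = {k < ρ}` (`ρ x` counts the `Xₖ` containing `x`), and its alternating difference is the
set where `ρ` is odd. In these terms complementation is `ρ ↦ ρ + 1` and intersection is
`(ρ, σ) ↦ ρ * σ`; the superlevel sets of `ρ * σ` are finite unions of intersections of
superlevel sets of `ρ` and `σ`, so they stay in the lattice.
-/

section

variable {ι E : Type*} {F : Set (Set E)}

lemma SupClosed.biUnion_finset_mem {S : Set (Set E)} (hS : SupClosed S) (hempty : ∅ ∈ S)
    (t : Finset ι) {f : ι → Set E} (hf : ∀ i ∈ t, f i ∈ S) : ⋃ i ∈ t, f i ∈ S := by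
  rcases t.eq_empty_or_nonempty with rfl | ht
  · simpa using hempty
  · rw [← Finset.sup_set_eq_biUnion]
    exact hS.finsetSup_mem ht hf

lemma exists_rank_of_antitone {X : ℕ → Set E} (hX : Antitone X) {n : ℕ} (hn : X n = ∅) :
    ∃ ρ : E → ℕ, (∀ x, ρ x ≤ n) ∧ ∀ k x, x ∈ X k ↔ k < ρ x := by
  classical
  have hexit : ∀ x, ∃ i, x ∉ X i := fun x => ⟨n, by simp [hn]⟩
  refine ⟨fun x => Nat.find (hexit x), fun x => Nat.find_le (by simp [hn]), fun k x => ?_⟩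
  rw [Nat.lt_find_iff]
  simp only [not_not]
  exact ⟨fun hk m hm => hX hm hk, fun h => h k le_rfl⟩

lemma altDiff_eq_setOf_odd {X : ℕ → Set E} {ρ : E → ℕ} (hX : ∀ k x, x ∈ X k ↔ k < ρ x) :
    altDiff X = {x | Odd (ρ x)} := by
  ext x
  simp only [altDiff, Set.mem_iUnion, Set.mem_sdiff, hX, Set.mem_ofPred_eq, Nat.odd_iff]
  constructor
  · rintro ⟨k, h₁, h₂⟩
    omega
  · intro h
    exact ⟨ρ x / 2, by omega, by omega⟩

def IsRankFunction (F : Set (Set E)) (ρ : E → ℕ) : Prop :=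
  BddAbove (Set.range ρ) ∧ ∀ k, {x | k < ρ x} ∈ F

def HasOddRank (F : Set (Set E)) (S : Set E) : Prop :=
  ∃ ρ, IsRankFunction F ρ ∧ S = {x | Odd (ρ x)}

lemma exists_mem_diffHier_iff_hasOddRank (hempty : ∅ ∈ F) {S : Set E} :
    (∃ n, S ∈ diffHier F n) ↔ HasOddRank F S := by
  constructor
  · rintro ⟨n, X, hXF, hX0, hX, rfl⟩
    obtain ⟨ρ, hρn, hρX⟩ := exists_rank_of_antitone hX (hX0 n le_rfl)
    refine ⟨ρ, ⟨⟨n, Set.forall_mem_range.2 hρn⟩, fun k => ?_⟩, altDiff_eq_setOf_odd hρX⟩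
    have hXk : {x | k < ρ x} = X k := by ext x; exact (hρX k x).symm
    rw [hXk]
    rcases lt_or_ge k n with hk | hk
    · exact hXF k hk
    · exact hX0 k hk ▸ hempty
  · rintro ⟨ρ, ⟨⟨n, hn⟩, hρF⟩, rfl⟩
    have hρn : ∀ x, ρ x ≤ n := fun x => hn ⟨x, rfl⟩
    refine ⟨n, fun k => {x | k < ρ x}, fun k _ => hρF k, fun k hk => ?_,
      fun i j hij x hx => lt_of_le_of_lt hij hx, (altDiff_eq_setOf_odd fun _ _ => Iff.rfl).symm⟩
    ext x
    simpa using (hρn x).trans hk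

namespace IsRankFunction

variable {ρ σ : E → ℕ}

lemma setOf_le_mem (huniv : Set.univ ∈ F) (hρ : IsRankFunction F ρ) (a : ℕ) :
    {x | a ≤ ρ x} ∈ F := by
  cases a with
  | zero => simpa using huniv
  | succ k => exact hρ.2 k

lemma add_one (huniv : Set.univ ∈ F) (hρ : IsRankFunction F ρ) :
    IsRankFunction F (ρ + 1) := by
  refine ⟨?_, fun k => ?_⟩
  · obtain ⟨n, hn⟩ := hρ.1
    exact ⟨n + 1, Set.forall_mem_range.2 fun x => Nat.succ_le_succ (hn ⟨x, rfl⟩)⟩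
  · cases k with
    | zero => simpa using huniv
    | succ k => simpa using hρ.2 k

lemma map₂ (hempty : ∅ ∈ F) (huniv : Set.univ ∈ F) (hsup : SupClosed F) (hinf : InfClosed F)
    (hρ : IsRankFunction F ρ) (hσ : IsRankFunction F σ) {f : ℕ → ℕ → ℕ}
    (hf : ∀ ⦃a a' b b'⦄, a ≤ a' → b ≤ b' → f a b ≤ f a' b') :
    IsRankFunction F fun x => f (ρ x) (σ x) := by
  classical
  obtain ⟨m, hm⟩ := hρ.1
  obtain ⟨n, hn⟩ := hσ.1
  have hρm : ∀ x, ρ x ≤ m := fun x => hm ⟨x, rfl⟩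
  have hσn : ∀ x, σ x ≤ n := fun x => hn ⟨x, rfl⟩
  refine ⟨⟨f m n, Set.forall_mem_range.2 fun x => hf (hρm x) (hσn x)⟩, fun k => ?_⟩
  have hk : {x | k < f (ρ x) (σ x)} =
      ⋃ p ∈ (Finset.range (m + 1) ×ˢ Finset.range (n + 1)).filter (fun p => k < f p.1 p.2),
        {x | p.1 ≤ ρ x} ∩ {x | p.2 ≤ σ x} := by
    ext x
    simp only [Set.mem_ofPred_eq, Set.mem_iUnion, Set.mem_inter_iff, Finset.mem_filter,
      Finset.mem_product, Finset.mem_range, exists_prop, Prod.exists]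
    constructor
    · intro h
      exact ⟨ρ x, σ x, ⟨⟨Nat.lt_succ_of_le (hρm x), Nat.lt_succ_of_le (hσn x)⟩, h⟩, le_rfl, le_rfl⟩
    · rintro ⟨a, b, ⟨-, hab⟩, ha, hb⟩
      exact hab.trans_le (hf ha hb)
  rw [hk]
  exact hsup.biUnion_finset_mem hempty _ fun p _ =>
    hinf (hρ.setOf_le_mem huniv p.1) (hσ.setOf_le_mem huniv p.2)

end IsRankFunction

namespace HasOddRank

variable {S T : Set E}

lemma of_mem (hempty : ∅ ∈ F) (hS : S ∈ F) : HasOddRank F S := by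
  classical
  refine ⟨fun x => if x ∈ S then 1 else 0, ⟨⟨1, ?_⟩, fun k => ?_⟩, ?_⟩
  · rintro _ ⟨x, rfl⟩
    dsimp only
    split <;> omega
  · cases k with
    | zero => convert hS using 1; ext x; by_cases hx : x ∈ S <;> simp [hx]
    | succ k => convert hempty using 1; ext x; by_cases hx : x ∈ S <;> simp [hx]
  · ext x
    by_cases hx : x ∈ S <;> simp [hx]

lemma compl (huniv : Set.univ ∈ F) (hS : HasOddRank F S) : HasOddRank F Sᶜ := by
  obtain ⟨ρ, hρ, rfl⟩ := hS
  exact ⟨ρ + 1, hρ.add_one huniv, by ext x; simp [Nat.odd_add_one]⟩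

lemma inter (hempty : ∅ ∈ F) (huniv : Set.univ ∈ F) (hsup : SupClosed F) (hinf : InfClosed F)
    (hS : HasOddRank F S) (hT : HasOddRank F T) : HasOddRank F (S ∩ T) := by
  obtain ⟨ρ, hρ, rfl⟩ := hS
  obtain ⟨σ, hσ, rfl⟩ := hT
  exact ⟨fun x => ρ x * σ x, hρ.map₂ hempty huniv hsup hinf hσ fun _ _ _ _ => Nat.mul_le_mul,
    by ext x; simp [Nat.odd_mul]⟩

lemma boolClosure (hempty : ∅ ∈ F) (hS : HasOddRank F S) : BoolClosure F S := by
  obtain ⟨ρ, ⟨⟨n, hn⟩, hρF⟩, rfl⟩ := hS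
  have hρS : {x | Odd (ρ x)} =
      ⋃ k ∈ Finset.range n, {x | 2 * k < ρ x} ∩ {x | 2 * k + 1 < ρ x}ᶜ := by
    ext x
    have hρn : ρ x ≤ n := hn ⟨x, rfl⟩
    simp only [Set.mem_ofPred_eq, Set.mem_iUnion, Set.mem_inter_iff, Set.mem_compl_iff,
      Finset.mem_range, exists_prop, Nat.odd_iff]
    constructor
    · intro h
      exact ⟨ρ x / 2, by omega, by omega, by omega⟩
    · rintro ⟨k, -, h₁, h₂⟩
      omega
  rw [hρS]
  have hsup : SupClosed {S | BoolClosure F S} := fun _ hX _ hY => .union hX hY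
  exact hsup.biUnion_finset_mem (.base hempty) _ fun k _ =>
    .inter (.base (hρF _)) (.compl (.base (hρF _)))

end HasOddRank

lemma BoolClosure.hasOddRank (hempty : ∅ ∈ F) (huniv : Set.univ ∈ F) (hsup : SupClosed F)
    (hinf : InfClosed F) {S : Set E} (hS : BoolClosure F S) : HasOddRank F S := by
  induction hS with
  | base h => exact .of_mem hempty h
  | compl _ ih => exact ih.compl huniv
  | inter _ _ ihX ihY => exact ihX.inter hempty huniv hsup hinf ihY
  | union _ _ ihX ihY =>
    rw [← compl_compl (_ ∪ _), Set.compl_union]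
    exact ((ihX.compl huniv).inter hempty huniv hsup hinf (ihY.compl huniv)).compl huniv

end

/-- **Hausdorff's theorem.** If `𝓕` is a lattice of subsets of `E`, the union of
the classes `Bₙ(𝓕)` is the Boolean closure of `𝓕`. -/
theorem unionDiffHier_eq_boolClosure {E : Type*} (F : Set (Set E))
    (hempty : (∅ : Set E) ∈ F) (huniv : (Set.univ : Set E) ∈ F)
    (hunion : ∀ X ∈ F, ∀ Y ∈ F, X ∪ Y ∈ F)
    (hinter : ∀ X ∈ F, ∀ Y ∈ F, X ∩ Y ∈ F) :
    (⋃ n, diffHier F n) = {S | BoolClosure F S} := by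
  have hsup : SupClosed F := fun X hX Y hY => hunion X hX Y hY
  have hinf : InfClosed F := fun X hX Y hY => hinter X hX Y hY
  ext S
  rw [Set.mem_iUnion, exists_mem_diffHier_iff_hasOddRank hempty]
  exact ⟨HasOddRank.boolClosure hempty, BoolClosure.hasOddRank hempty huniv hsup hinf⟩
end

section
/- Let 𝓕 be a lattice of subsets of a set E. If X ∈ Bₙ(𝓕) is given by a decreasing chain X₁ ⊇ ⋯ ⊇ Xₙ in 𝓕 and Y ∈ Bₘ(𝓕) is given by a decreasing chain Y₁ ⊇ ⋯ ⊇ Yₘ in 𝓕, then the sets Z_k = ⋃ { X_i ∩ Y_j : i + j = k + 1 and i, j are not both even } (for 1 ≤ k ≤ n + m − 1) form a decreasing chain of members of 𝓕 whose alternating difference Z₁ − Z₂ + ⋯ ± Z_{n+m−1} equals X ∩ Y; in particular X ∩ Y ∈ B_{n+m−1}(𝓕). -/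
section HausdorffProd

open Finset

variable {E : Type*}

/-- The sets `Z_k` of Hausdorff's product construction, indexed from `0`. -/
def hausdorffProd (X Y : ℕ → Set E) (k : ℕ) : Set E :=
  ⋃ (p : ℕ × ℕ) (_ : p.1 + p.2 = k ∧ ¬(Odd p.1 ∧ Odd p.2)), X p.1 ∩ Y p.2

/-- The depth in `hausdorffProd X Y` of a point of depth `p` in `X` and `q` in `Y`. -/
def interDepth (p q : ℕ) : ℕ :=
  if p = 0 ∨ q = 0 then 0 else if Even p ∧ Even q then p + q - 2 else p + q - 1

lemma lt_interDepth_iff (p q k : ℕ) :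
    k < interDepth p q ↔ ∃ a b, (a + b = k ∧ ¬(Odd a ∧ Odd b)) ∧ a < p ∧ b < q := by
  simp only [interDepth, Nat.odd_iff, Nat.even_iff]
  constructor
  · intro hk
    split_ifs at hk <;>
    · by_cases hkp : k < p
      · exact ⟨k, 0, ⟨by omega, by omega⟩, hkp, by omega⟩
      -- Cut `k` at the last index `p - 1` of `X`, or at `p - 2` if that makes both parts odd.
      by_cases hodd : (p - 1) % 2 = 1 ∧ (k - (p - 1)) % 2 = 1
      · exact ⟨p - 2, k - (p - 2), ⟨by omega, by omega⟩, by omega, by omega⟩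
      · exact ⟨p - 1, k - (p - 1), ⟨by omega, hodd⟩, by omega, by omega⟩
  · rintro ⟨a, b, ⟨rfl, hab⟩, ha, hb⟩
    split_ifs <;> omega

lemma odd_interDepth_iff (p q : ℕ) : Odd (interDepth p q) ↔ Odd p ∧ Odd q := by
  simp only [interDepth, Nat.odd_iff, Nat.even_iff]
  split_ifs <;> grind

variable {X Y : ℕ → Set E} {x : E} {p q : ℕ}

lemma exists_forall_mem_iff_lt (hX : Antitone X) {n : ℕ} (hn : X n = ∅) (x : E) :
    ∃ r, ∀ i, x ∈ X i ↔ i < r := by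
  classical
  have hout : ∃ i, x ∉ X i := ⟨n, by simp [hn]⟩
  refine ⟨Nat.find hout, fun i => ⟨fun hx => ?_, fun hi => not_not.1 (Nat.find_min hout hi)⟩⟩
  by_contra! hle
  exact Nat.find_spec hout (hX hle hx)

lemma mem_altDiff_iff_odd (hX : ∀ i, x ∈ X i ↔ i < p) : x ∈ altDiff X ↔ Odd p := by
  simp only [altDiff, Set.mem_iUnion, Set.mem_sdiff, hX, not_lt, Nat.odd_iff]
  constructor
  · rintro ⟨k, hlt, hle⟩
    omega
  · intro hp
    exact ⟨p / 2, by omega, by omega⟩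

lemma mem_hausdorffProd_iff (hX : ∀ i, x ∈ X i ↔ i < p) (hY : ∀ j, x ∈ Y j ↔ j < q) (k : ℕ) :
    x ∈ hausdorffProd X Y k ↔ k < interDepth p q := by
  simp only [hausdorffProd, Set.mem_iUnion, Set.mem_inter_iff, hX, hY, exists_prop,
    Prod.exists]
  exact (lt_interDepth_iff p q k).symm

variable {n m : ℕ}

lemma antitone_hausdorffProd (hX : Antitone X) (hXn : X n = ∅) (hY : Antitone Y)
    (hYm : Y m = ∅) : Antitone (hausdorffProd X Y) := by
  intro i j hij x hx
  obtain ⟨p, hp⟩ := exists_forall_mem_iff_lt hX hXn x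
  obtain ⟨q, hq⟩ := exists_forall_mem_iff_lt hY hYm x
  rw [mem_hausdorffProd_iff hp hq] at hx ⊢
  omega

lemma altDiff_hausdorffProd (hX : Antitone X) (hXn : X n = ∅) (hY : Antitone Y)
    (hYm : Y m = ∅) : altDiff (hausdorffProd X Y) = altDiff X ∩ altDiff Y := by
  ext x
  obtain ⟨p, hp⟩ := exists_forall_mem_iff_lt hX hXn x
  obtain ⟨q, hq⟩ := exists_forall_mem_iff_lt hY hYm x
  rw [Set.mem_inter_iff, mem_altDiff_iff_odd hp, mem_altDiff_iff_odd hq,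
    mem_altDiff_iff_odd (mem_hausdorffProd_iff hp hq), odd_interDepth_iff]

lemma hausdorffProd_eq_empty (hX : ∀ i, n ≤ i → X i = ∅) (hY : ∀ j, m ≤ j → Y j = ∅)
    {k : ℕ} (hk : n + m - 1 ≤ k) : hausdorffProd X Y k = ∅ := by
  simp only [hausdorffProd, Set.iUnion_eq_empty]
  rintro ⟨a, b⟩ ⟨hab, -⟩
  rcases lt_or_ge a n with ha | ha
  · rw [hY b (by omega), Set.inter_empty]
  · rw [hX a ha, Set.empty_inter]

lemma hausdorffProd_eq_sup (X Y : ℕ → Set E) (k : ℕ) :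
    hausdorffProd X Y k =
      ((antidiagonal k).filter fun p => ¬(Odd p.1 ∧ Odd p.2)).sup fun p => X p.1 ∩ Y p.2 := by
  ext x
  simp [hausdorffProd, sup_set_eq_biUnion]

lemma hausdorffProd_mem (F : Set (Set E)) (hempty : ∅ ∈ F)
    (hunion : ∀ X ∈ F, ∀ Y ∈ F, X ∪ Y ∈ F) (hinter : ∀ X ∈ F, ∀ Y ∈ F, X ∩ Y ∈ F)
    (hXF : ∀ i, i < n → X i ∈ F) (hXe : ∀ i, n ≤ i → X i = ∅)
    (hYF : ∀ j, j < m → Y j ∈ F) (hYe : ∀ j, m ≤ j → Y j = ∅) (k : ℕ) :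
    hausdorffProd X Y k ∈ F := by
  rw [hausdorffProd_eq_sup]
  refine sup_mem F hempty hunion _ _ fun ⟨a, b⟩ _ => ?_
  rcases lt_or_ge a n with ha | ha
  · rcases lt_or_ge b m with hb | hb
    · exact hinter _ (hXF a ha) _ (hYF b hb)
    · rwa [hYe b hb, Set.inter_empty]
  · rwa [hXe a ha, Set.empty_inter]

end HausdorffProd

theorem inter_mem_diffHier_general {E : Type*} (F : Set (Set E))
    (hempty : (∅ : Set E) ∈ F)
    (hunion : ∀ X ∈ F, ∀ Y ∈ F, X ∪ Y ∈ F)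
    (hinter : ∀ X ∈ F, ∀ Y ∈ F, X ∩ Y ∈ F)
    (n m : ℕ) (X Y : ℕ → Set E)
    (hXF : ∀ i, i < n → X i ∈ F) (hXe : ∀ i, n ≤ i → X i = ∅)
    (hXdec : ∀ i j, i ≤ j → X j ⊆ X i)
    (hYF : ∀ j, j < m → Y j ∈ F) (hYe : ∀ j, m ≤ j → Y j = ∅)
    (hYdec : ∀ i j, i ≤ j → Y j ⊆ Y i)
    (Z : ℕ → Set E)
    (hZ : ∀ k, Z k =
      ⋃ (p : ℕ × ℕ) (_ : p.1 + p.2 = k ∧ ¬(Odd p.1 ∧ Odd p.2)), X p.1 ∩ Y p.2) :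
    (∀ k, k < n + m - 1 → Z k ∈ F) ∧ (∀ k, n + m - 1 ≤ k → Z k = ∅) ∧
    (∀ i j, i ≤ j → Z j ⊆ Z i) ∧ altDiff Z = altDiff X ∩ altDiff Y ∧
    altDiff X ∩ altDiff Y ∈ diffHier F (n + m - 1) := by
  obtain rfl : Z = hausdorffProd X Y := funext hZ
  have hXanti : Antitone X := fun i j hij => hXdec i j hij
  have hYanti : Antitone Y := fun i j hij => hYdec i j hij
  have hZF := hausdorffProd_mem F hempty hunion hinter hXF hXe hYF hYe
  have hZe : ∀ k, n + m - 1 ≤ k → hausdorffProd X Y k = ∅ :=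
    fun k hk => hausdorffProd_eq_empty hXe hYe hk
  have hZdec : ∀ i j, i ≤ j → hausdorffProd X Y j ⊆ hausdorffProd X Y i :=
    fun i j hij => antitone_hausdorffProd hXanti (hXe n le_rfl) hYanti (hYe m le_rfl) hij
  have hZalt := altDiff_hausdorffProd hXanti (hXe n le_rfl) hYanti (hYe m le_rfl)
  exact ⟨fun k _ => hZF k, hZe, hZdec, hZalt,
    hausdorffProd X Y, fun k _ => hZF k, hZe, hZdec, hZalt.symm⟩

/-- Hausdorff's product construction. If `X ∈ Bₙ(𝓕)` is given by the decreasing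
chain `X₁ ⊇ ⋯ ⊇ Xₙ` and `Y ∈ Bₘ(𝓕)` by `Y₁ ⊇ ⋯ ⊇ Yₘ`, then the sets
`Z_k = ⋃ {X_i ∩ Y_j : i + j = k + 1, i and j not both even}` (in the 1-indexed
convention; here everything is indexed from 0, so the condition reads
`i + j = k` and `i`, `j` not both odd) form a decreasing chain of members of
`𝓕` whose alternating difference equals `X ∩ Y`; hence `X ∩ Y ∈ B_{n+m-1}(𝓕)`. -/
theorem inter_mem_diffHier {E : Type*} (F : Set (Set E))
    (hempty : (∅ : Set E) ∈ F) (huniv : (Set.univ : Set E) ∈ F)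
    (hunion : ∀ X ∈ F, ∀ Y ∈ F, X ∪ Y ∈ F)
    (hinter : ∀ X ∈ F, ∀ Y ∈ F, X ∩ Y ∈ F)
    (n m : ℕ) (X Y : ℕ → Set E)
    (hXF : ∀ i, i < n → X i ∈ F) (hXe : ∀ i, n ≤ i → X i = ∅)
    (hXdec : ∀ i j, i ≤ j → X j ⊆ X i)
    (hYF : ∀ j, j < m → Y j ∈ F) (hYe : ∀ j, m ≤ j → Y j = ∅)
    (hYdec : ∀ i j, i ≤ j → Y j ⊆ Y i)
    (Z : ℕ → Set E)
    (hZ : ∀ k, Z k =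
      ⋃ (p : ℕ × ℕ) (_ : p.1 + p.2 = k ∧ ¬(Odd p.1 ∧ Odd p.2)), X p.1 ∩ Y p.2) :
    (∀ k, k < n + m - 1 → Z k ∈ F) ∧ (∀ k, n + m - 1 ≤ k → Z k = ∅) ∧
    (∀ i j, i ≤ j → Z j ⊆ Z i) ∧ altDiff Z = altDiff X ∩ altDiff Y ∧
    altDiff X ∩ altDiff Y ∈ diffHier F (n + m - 1) :=
  inter_mem_diffHier_general F hempty hunion hinter n m X Y hXF hXe hXdec hYF hYe hYdec Z hZ
end

section
/- Let 𝓕 be a lattice of subsets of a set E. For every n ≥ 0, Bₙ(𝓕) coincides with the class of all sets of the form X₁ △ X₂ △ ⋯ △ Xₙ where X₁, …, Xₙ ∈ 𝓕 and △ denotes symmetric difference. -/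
/-- The iterated symmetric difference `X₁ △ X₂ △ ⋯ △ Xₙ`. -/
def symIter {E : Type*} (X : ℕ → Set E) : ℕ → Set E
  | 0 => ∅
  | n + 1 => symmDiff (symIter X n) (X n)

attribute [local instance] Classical.propDecidable

open Finset in
lemma mem_symIter_iff {E : Type*} (Y : ℕ → Set E) (x : E) (n : ℕ) :
    x ∈ symIter Y n ↔ Odd (((Finset.range n).filter (fun i => x ∈ Y i)).card) := by
  induction n with
  | zero => simp [symIter]
  | succ n ih =>
    rw [symIter, Set.mem_symmDiff, ih, Finset.range_add_one, Finset.filter_insert]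
    by_cases h : x ∈ Y n
    · have hn : n ∉ (Finset.range n).filter (fun i => x ∈ Y i) := by simp
      simp only [h, if_pos, Finset.card_insert_of_notMem hn, Nat.odd_add_one]
      tauto
    · simp only [h, if_neg, not_false_iff]
      tauto

lemma mem_altDiff_chain_iff {E : Type*} (X : ℕ → Set E) (n : ℕ)
    (hz : ∀ i, n ≤ i → X i = ∅) (hmono : ∀ i j, i ≤ j → X j ⊆ X i) (x : E) :
    x ∈ altDiff X ↔ Odd (((Finset.range n).filter (fun i => x ∈ X i)).card) := by
  set c := ((Finset.range n).filter (fun i => x ∈ X i)).card with hc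
  have key : ∀ i, x ∈ X i ↔ i < c := by
    intro i
    constructor
    · intro hi
      have hin : i < n := by
        by_contra hcon
        rw [hz i (le_of_not_gt hcon)] at hi
        exact hi
      have : Finset.range (i + 1) ⊆ (Finset.range n).filter (fun j => x ∈ X j) := by
        intro j hj
        rw [Finset.mem_range] at hj
        rw [Finset.mem_filter, Finset.mem_range]
        exact ⟨lt_of_lt_of_le hj hin, hmono j i (Nat.lt_succ_iff.mp hj) hi⟩
      have := Finset.card_le_card this
      simpa using this
    · intro hi
      by_contra hcon
      have : (Finset.range n).filter (fun j => x ∈ X j) ⊆ Finset.range i := by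
        intro j hj
        rw [Finset.mem_filter] at hj
        rw [Finset.mem_range]
        by_contra hj2
        exact hcon (hmono i j (le_of_not_gt hj2) hj.2)
      have := Finset.card_le_card this
      simp only [Finset.card_range] at this
      omega
  constructor
  · rintro hx
    rw [altDiff, Set.mem_iUnion] at hx
    obtain ⟨k, h1, h2⟩ := hx
    rw [key] at h1
    rw [key] at h2
    rw [Nat.odd_iff]
    omega
  · intro hodd
    rw [Nat.odd_iff] at hodd
    rw [altDiff, Set.mem_iUnion]
    refine ⟨c / 2, ?_⟩
    rw [Set.mem_diff, key, key]
    omega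

lemma biUnion_mem {E ι : Type*} {F : Set (Set E)} (hempty : (∅ : Set E) ∈ F)
    (hunion : ∀ X ∈ F, ∀ Y ∈ F, X ∪ Y ∈ F) (s : Finset ι) (f : ι → Set E)
    (hf : ∀ i ∈ s, f i ∈ F) : (⋃ i ∈ s, f i) ∈ F := by
  classical
  induction s using Finset.induction with
  | empty => simpa using hempty
  | @insert a t hni ih =>
    rw [Finset.set_biUnion_insert]
    exact hunion _ (hf a (Finset.mem_insert_self a t)) _
      (ih fun i hi => hf i (Finset.mem_insert_of_mem hi))

lemma biInter_mem {E ι : Type*} {F : Set (Set E)} (huniv : (Set.univ : Set E) ∈ F)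
    (hinter : ∀ X ∈ F, ∀ Y ∈ F, X ∩ Y ∈ F) (s : Finset ι) (f : ι → Set E)
    (hf : ∀ i ∈ s, f i ∈ F) : (⋂ i ∈ s, f i) ∈ F := by
  classical
  induction s using Finset.induction with
  | empty => simpa using huniv
  | @insert a t hni ih =>
    rw [Finset.set_biInter_insert]
    exact hinter _ (hf a (Finset.mem_insert_self a t)) _
      (ih fun i hi => hf i (Finset.mem_insert_of_mem hi))

/-- (Hausdorff) If `𝓕` is a lattice of subsets of `E`, then for every `n ≥ 0`,
`Bₙ(𝓕)` coincides with the class of sets `X₁ △ X₂ △ ⋯ △ Xₙ` with `X₁, …, Xₙ ∈ 𝓕`. -/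
theorem diffHier_eq_symmDiffClass {E : Type*} (F : Set (Set E))
    (hempty : (∅ : Set E) ∈ F) (huniv : (Set.univ : Set E) ∈ F)
    (hunion : ∀ X ∈ F, ∀ Y ∈ F, X ∪ Y ∈ F)
    (hinter : ∀ X ∈ F, ∀ Y ∈ F, X ∩ Y ∈ F) (n : ℕ) :
    diffHier F n = {S | ∃ X : ℕ → Set E, (∀ i, i < n → X i ∈ F) ∧ S = symIter X n} := by
  ext S
  constructor
  · rintro ⟨X, hF, hz, hmono, rfl⟩
    refine ⟨X, hF, ?_⟩
    ext x
    rw [mem_altDiff_chain_iff X n hz hmono x, mem_symIter_iff]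
  · rintro ⟨Y, hF, rfl⟩
    set Z : ℕ → Set E := fun k => ⋃ s ∈ (Finset.range n).powersetCard (k + 1), ⋂ j ∈ s, Y j
      with hZ
    have memZ : ∀ k x, x ∈ Z k ↔
        k + 1 ≤ ((Finset.range n).filter (fun i => x ∈ Y i)).card := by
      intro k x
      simp only [hZ, Set.mem_iUnion, exists_prop]
      constructor
      · rintro ⟨s, hs, hxs⟩
        rw [Finset.mem_powersetCard] at hs
        have : s ⊆ (Finset.range n).filter (fun i => x ∈ Y i) := by
          intro j hj
          rw [Finset.mem_filter]
          refine ⟨hs.1 hj, ?_⟩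
          simp only [Set.mem_iInter] at hxs
          exact hxs j hj
        have := Finset.card_le_card this
        omega
      · intro hcard
        obtain ⟨s, hs, hcard'⟩ := Finset.exists_subset_card_eq hcard
        refine ⟨s, ?_, ?_⟩
        · rw [Finset.mem_powersetCard]
          exact ⟨hs.trans (Finset.filter_subset _ _), hcard'⟩
        · simp only [Set.mem_iInter]
          intro j hj
          exact (Finset.mem_filter.mp (hs hj)).2
    refine ⟨Z, ?_, ?_, ?_, ?_⟩
    · intro k _
      exact biUnion_mem hempty hunion _ _ fun s hs =>
        biInter_mem huniv hinter _ _ fun j hj => by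
          rw [Finset.mem_powersetCard] at hs
          exact hF j (Finset.mem_range.mp (hs.1 hj))
    · intro k hk
      ext x
      rw [memZ]
      simp only [Set.mem_empty_iff_false, iff_false]
      have := Finset.card_le_card (Finset.filter_subset (fun i => x ∈ Y i) (Finset.range n))
      simp only [Finset.card_range] at this
      omega
    · intro i j hij x hx
      rw [memZ] at hx ⊢
      omega
    · ext x
      rw [mem_symIter_iff, mem_altDiff_chain_iff Z n ?_ ?_ x]
      · constructor
        · intro hodd
          rw [Nat.odd_iff] at hodd ⊢
          set c := ((Finset.range n).filter (fun i => x ∈ Y i)).card with hc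
          have : ∀ k, x ∈ Z k ↔ k < c := by intro k; rw [memZ]; omega
          have : (Finset.range n).filter (fun i => x ∈ Z i) = Finset.range (min c n) := by
            ext j
            simp only [Finset.mem_filter, Finset.mem_range, this, Finset.mem_range, lt_min_iff]
            tauto
          rw [this, Finset.card_range]
          have hcn : c ≤ n := by
            have := Finset.card_le_card (Finset.filter_subset (fun i => x ∈ Y i)
              (Finset.range n))
            simpa using this
          omega
        · intro hodd
          rw [Nat.odd_iff] at hodd ⊢
          set c := ((Finset.range n).filter (fun i => x ∈ Y i)).card with hc
          have h1 : ∀ k, x ∈ Z k ↔ k < c := by intro k; rw [memZ]; omega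
          have h2 : (Finset.range n).filter (fun i => x ∈ Z i) = Finset.range (min c n) := by
            ext j
            simp only [Finset.mem_filter, Finset.mem_range, h1, lt_min_iff]
            tauto
          rw [h2, Finset.card_range] at hodd
          have hcn : c ≤ n := by
            have := Finset.card_le_card (Finset.filter_subset (fun i => x ∈ Y i)
              (Finset.range n))
            simpa using this
          omega
      · intro i hi
        ext y
        rw [memZ]
        simp only [Set.mem_empty_iff_false, iff_false]
        have := Finset.card_le_card (Finset.filter_subset (fun j => y ∈ Y j) (Finset.range n))
        simp only [Finset.card_range] at this
        omega
      · intro i j hij y hy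
        rw [memZ] at hy ⊢
        omega
end

section
/- Let (M₁, ≤₁), …, (Mₙ, ≤ₙ) be finite ordered monoids, let η_i : A* → M_i be monoid morphisms from the free monoid over a finite alphabet A, let P_i be an upper set of M_i and L_i = η_i⁻¹(P_i). Suppose L₁ ⊇ L₂ ⊇ ⋯ ⊇ Lₙ and L = L₁ − L₂ + ⋯ ± Lₙ. Let η : A* → M₁ × ⋯ × Mₙ be the morphism η(u) = (η₁(u), …, ηₙ(u)), with the product monoid ordered componentwise. Then there exists a subset P of M₁ × ⋯ × Mₙ such that L = η⁻¹(P) and every P-chain in M₁ × ⋯ × Mₙ has length at most n. -/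
/-- A `P`-chain of length `m`: a strictly increasing sequence
`x₀ < x₁ < ⋯ < x_{m−1}` with `x₀ ∈ P` and the `x_i` alternately in `P` and out
of `P`. -/
def PChain {M : Type*} [Preorder M] (P : Set M) (x : ℕ → M) (m : ℕ) : Prop :=
  0 < m ∧ (∀ i, i + 1 < m → x i < x (i + 1)) ∧ x 0 ∈ P ∧
  ∀ i, 0 < i → i < m → (x i ∈ P ↔ x (i - 1) ∉ P)

/-- If `L = L₁ − L₂ + ⋯ ± Lₙ` where `L₁ ⊇ ⋯ ⊇ Lₙ`, `L_i = η_i⁻¹(P_i)` and each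
`P_i` is an upper set of the finite ordered monoid `M_i`, then for the product
morphism `η : A* → M₁ × ⋯ × Mₙ` (ordered componentwise) there is a subset `P` of
the product with `L = η⁻¹(P)` such that every `P`-chain has length at most `n`. -/
theorem exists_recognizing_subset_of_diff {A : Type*} [Fintype A] {n : ℕ}
    (M : Fin n → Type*) [∀ i, Monoid (M i)] [∀ i, Fintype (M i)]
    [∀ i, PartialOrder (M i)]
    [∀ i, CovariantClass (M i) (M i) (· * ·) (· ≤ ·)]
    [∀ i, CovariantClass (M i) (M i) (Function.swap (· * ·)) (· ≤ ·)]
    (η : ∀ i, FreeMonoid A →* M i) (P : ∀ i, Set (M i))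
    (hP : ∀ i, IsUpperSet (P i))
    (Lset : Fin n → Set (FreeMonoid A)) (hLset : ∀ i, Lset i = (η i) ⁻¹' (P i))
    (hdec : ∀ i j : Fin n, i ≤ j → Lset j ⊆ Lset i)
    (L : Set (FreeMonoid A))
    (hL : L = altDiff (fun k => if h : k < n then Lset ⟨k, h⟩ else ∅)) :
    ∃ Q : Set (∀ i, M i),
      L = (Pi.monoidHom η) ⁻¹' Q ∧
      ∀ (x : ℕ → ∀ i, M i) (m : ℕ), PChain Q x m → m ≤ n := by

  classical
  set T : ℕ → Set (∀ i, M i) := fun k =>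
    if h : k < n then {x | ∀ j : Fin n, j ≤ ⟨k, h⟩ → x j ∈ P j} else ∅ with hT
  have hTempty : ∀ x, ∃ k, x ∉ T k := fun x => ⟨n, by simp [hT]⟩
  set r : (∀ i, M i) → ℕ := fun x => Nat.find (hTempty x) with hr
  have hmem : ∀ x k, x ∈ T k ↔ k < r x := by
    intro x k
    constructor
    · intro hx
      rw [hr]
      simp only
      rw [Nat.lt_find_iff]
      intro m hm hmem'
      apply hmem'
      by_cases h : k < n
      · simp only [hT, dif_pos h] at hx
        have hm' : m < n := lt_of_le_of_lt hm h
        simp only [hT, dif_pos hm', Set.mem_setOf_eq]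
        intro j hj
        exact hx j (le_trans hj (by simpa [Fin.le_def] using hm))
      · simp [hT, dif_neg h] at hx
    · intro hk
      have := Nat.find_min (hTempty x) hk
      simpa using this
  have hrle : ∀ x, r x ≤ n := fun x => Nat.find_le (by simp [hT])
  have hrmono : ∀ x y, x ≤ y → r x ≤ r y := by
    intro x y hxy
    by_contra h
    push_neg at h
    have hx : x ∈ T (r y) := (hmem x _).2 h
    have hy : y ∈ T (r y) := by
      by_cases hn : r y < n
      · simp only [hT, dif_pos hn, Set.mem_setOf_eq] at hx ⊢
        intro j hj
        exact hP j (hxy j) (hx j hj)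
      · simp [hT, dif_neg hn] at hx
    exact (Nat.find_spec (hTempty y)) hy
  refine ⟨{x | Odd (r x)}, ?_, ?_⟩
  · -- L = η⁻¹ Q
    have hTpre : ∀ k, (Pi.monoidHom η) ⁻¹' (T k) =
        (if h : k < n then Lset ⟨k, h⟩ else ∅) := by
      intro k
      by_cases h : k < n
      · simp only [hT, dif_pos h]
        ext u
        simp only [Set.mem_preimage, Set.mem_setOf_eq]
        constructor
        · intro hu
          have := hu ⟨k, h⟩ le_rfl
          rw [hLset]
          exact this
        · intro hu j hj
          have : u ∈ Lset j := hdec j ⟨k, h⟩ hj hu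
          rw [hLset] at this
          exact this
      · simp [hT, dif_neg h]
    have hodd : ∀ x, Odd (r x) ↔ ∃ k, x ∈ T (2 * k) ∧ x ∉ T (2 * k + 1) := by
      intro x
      simp only [hmem]
      constructor
      · rintro ⟨k, hk⟩
        exact ⟨k, by omega, by omega⟩
      · rintro ⟨k, h1, h2⟩
        exact ⟨k, by omega⟩
    rw [hL]
    ext u
    simp only [altDiff, Set.mem_iUnion, Set.mem_preimage, Set.mem_setOf_eq,
      hodd, Set.mem_diff]
    constructor
    · rintro ⟨k, h1, h2⟩
      refine ⟨k, ?_, ?_⟩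
      · rw [← hTpre (2 * k)] at h1; exact h1
      · rw [← hTpre (2 * k + 1)] at h2; exact h2
    · rintro ⟨k, h1, h2⟩
      refine ⟨k, ?_, ?_⟩
      · rw [← hTpre (2 * k)]; exact h1
      · rw [← hTpre (2 * k + 1)]; exact h2
  · -- chain bound
    rintro x m ⟨hm0, hinc, h0, halt⟩
    have key : ∀ i, i < m → i < r (x i) := by
      intro i
      induction i with
      | zero =>
        intro _
        rcases h0 with ⟨k, hk⟩
        omega
      | succ i ih =>
        intro hi
        have hlt : x i < x (i + 1) := hinc i hi
        have hle : r (x i) ≤ r (x (i + 1)) := hrmono _ _ hlt.le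
        have hpar : Odd (r (x (i + 1))) ↔ ¬ Odd (r (x i)) := by
          have := halt (i + 1) (Nat.succ_pos i) hi
          simpa using this
        have hne : r (x i) ≠ r (x (i + 1)) := by
          intro h
          rw [h] at hpar
          tauto
        have := ih (by omega)
        omega
    have h1 := key (m - 1) (by omega)
    have h2 := hrle (x (m - 1))
    omega
end

section
/- Let M be a finite monoid and let P ⊆ M satisfy: (S1) for every idempotent e ∈ M and all u, v ∈ M, u·e·v ∈ P implies e ∈ P; and (S2) for every x ∈ M and every n ≥ 1 such that xⁿ is idempotent, xⁿ ∈ P if and only if x ∈ P. Then P is cyclic: for all u ∈ M and n > 0, uⁿ ∈ P iff u ∈ P, and for all x, y ∈ M, xy ∈ P iff yx ∈ P. -/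
/-- A subset `P` of a monoid is cyclic if it is closed under powers and roots
(`uⁿ ∈ P ↔ u ∈ P` for `n > 0`) and under conjugation (`uv ∈ P ↔ vu ∈ P`). -/
def IsCyclicSet {M : Type*} [Monoid M] (P : Set M) : Prop :=
  (∀ u : M, ∀ n : ℕ, 0 < n → (u ^ n ∈ P ↔ u ∈ P)) ∧
  (∀ u v : M, u * v ∈ P ↔ v * u ∈ P)

/-- In a finite monoid, every element has an idempotent power. -/
lemma exists_idempotent_pow' {M : Type*} [Monoid M] [Fintype M] (x : M) :
    ∃ n : ℕ, 1 ≤ n ∧ IsIdempotentElem (x ^ n) := by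
  obtain ⟨i, j, hij, hpow⟩ := Finite.exists_ne_map_eq_of_infinite (fun n : ℕ => x ^ n)
  wlog hlt : i < j generalizing i j
  · exact this j i hij.symm hpow.symm (by omega)
  set d := j - i with hd
  have hd1 : 1 ≤ d := by omega
  have hstep : x ^ (i + d) = x ^ i := by
    have : i + d = j := by omega
    rw [this]; exact hpow.symm
  have hA : ∀ c : ℕ, x ^ (i + c * d) = x ^ i := by
    intro c
    induction c with
    | zero => simp
    | succ c ih =>
      have h2 : i + (c + 1) * d = (i + c * d) + d := by ring
      rw [h2, pow_add, ih, ← pow_add]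
      exact hstep
  refine ⟨(i + 1) * d, Nat.one_le_iff_ne_zero.mpr (by positivity), ?_⟩
  set n := (i + 1) * d with hn
  have hni : i ≤ n := by calc i ≤ (i+1)*1 := by omega
                               _ ≤ (i+1)*d := by exact Nat.mul_le_mul_left _ hd1
  show x ^ n * x ^ n = x ^ n
  rw [← pow_add]
  have h1 : n + n = (n - i) + (i + (i + 1) * d) := by omega
  rw [h1, pow_add, hA, ← pow_add]
  congr 1
  omega

lemma mul_pow_mul' {M : Type*} [Monoid M] (u v : M) (n : ℕ) :
    (u * v) ^ (n + 1) = u * (v * u) ^ n * v := by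
  induction n with
  | zero => simp
  | succ n ih =>
    rw [pow_succ, ih, pow_succ]
    simp [mul_assoc]

/-- If a subset `P` of a finite monoid `M` satisfies
(S1) `u·e·v ∈ P` implies `e ∈ P` for every idempotent `e` and all `u, v`, and
(S2) `xⁿ ∈ P ↔ x ∈ P` whenever `n ≥ 1` and `xⁿ` is idempotent,
then `P` is cyclic. -/
theorem cyclic_of_S1_S2 {M : Type*} [Monoid M] [Fintype M] (P : Set M)
    (hS1 : ∀ e u v : M, IsIdempotentElem e → u * e * v ∈ P → e ∈ P)
    (hS2 : ∀ x : M, ∀ n : ℕ, 1 ≤ n → IsIdempotentElem (x ^ n) → (x ^ n ∈ P ↔ x ∈ P)) :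
    IsCyclicSet P := by
  have hpow : ∀ u : M, ∀ n : ℕ, 0 < n → (u ^ n ∈ P ↔ u ∈ P) := by
    intro u n hn
    obtain ⟨m, hm1, hm⟩ := exists_idempotent_pow' (u ^ n)
    rw [← pow_mul] at hm
    have h1 := hS2 u (n * m) (by exact Nat.one_le_iff_ne_zero.mpr (by positivity)) hm
    have h2 := hS2 (u ^ n) m hm1 (by rwa [← pow_mul])
    rw [← pow_mul] at h2
    rw [← h1, ← h2]
  constructor
  · exact hpow
  · have key : ∀ u v : M, u * v ∈ P → v * u ∈ P := by
      intro u v huv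
      obtain ⟨n, hn1, hn⟩ := exists_idempotent_pow' (v * u)
      refine (hS2 (v * u) n hn1 hn).mp ?_
      refine hS1 ((v * u) ^ n) u v hn ?_
      rw [← mul_pow_mul']
      exact (hpow (u * v) (n + 1) (by omega)).mpr huv
    exact fun u v => ⟨key u v, key v u⟩
end

section
/- Let M and N be finite monoids, let π : N → M be a surjective monoid morphism, let P ⊆ M and set Q = π⁻¹(P). Then for every integer m ≥ 1, M contains a P-chain of idempotents of length m if and only if N contains a Q-chain of idempotents of length m. -/
/-- Green's `J`-preorder: `s ≤_J t` iff `s = u t v` for some `u, v`. -/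
def leJ {M : Type*} [Monoid M] (s t : M) : Prop :=
  ∃ u v : M, s = u * t * v

/-- A `P`-chain of idempotents of length `m`: idempotents
`e₀ ≤_J e₁ ≤_J ⋯ ≤_J e_{m−1}` with `e₀ ∈ P` and the `e_i` alternately in `P`
and out of `P`. -/
def IdemChain {M : Type*} [Monoid M] (P : Set M) (e : ℕ → M) (m : ℕ) : Prop :=
  0 < m ∧ (∀ i, i < m → IsIdempotentElem (e i)) ∧
  (∀ i, i + 1 < m → leJ (e i) (e (i + 1))) ∧ e 0 ∈ P ∧
  ∀ i, 0 < i → i < m → (e i ∈ P ↔ e (i - 1) ∉ P)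

lemma exists_idem_pow {N : Type*} [Monoid N] [Finite N] (x : N) :
    ∃ n, 0 < n ∧ IsIdempotentElem (x ^ n) := by
  obtain ⟨a, b, hab, h⟩ := Finite.exists_ne_map_eq_of_infinite (fun n : ℕ => x ^ (n + 1))
  wlog hlt : a < b generalizing a b
  · exact this b a hab.symm h.symm (by omega)
  set m := a + 1 with hm
  set k := b - a with hk
  have hk0 : 0 < k := by omega
  have hstep : x ^ (m + k) = x ^ m := by
    have : m + k = b + 1 := by omega
    rw [this]; exact h.symm
  have key : ∀ t, m ≤ t → x ^ (t + k) = x ^ t := by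
    intro t ht
    have : x ^ (t + k) = x ^ (t - m) * x ^ (m + k) := by
      rw [← pow_add]; congr 1; omega
    rw [this, hstep, ← pow_add]; congr 1; omega
  have key2 : ∀ j, x ^ (m * k + j * k) = x ^ (m * k) := by
    intro j
    induction j with
    | zero => simp
    | succ j ih =>
        have : m * k + (j + 1) * k = (m * k + j * k) + k := by ring
        rw [this, key _ (by nlinarith), ih]
  refine ⟨m * k, by positivity, ?_⟩
  unfold IsIdempotentElem
  rw [← pow_add]
  exact key2 m

lemma map_idem_pow {M N : Type*} [Monoid M] [Monoid N] (π : N →* M) (x : N) {e : M}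
    (hx : π x = e) (he : IsIdempotentElem e) {n : ℕ} (hn : 0 < n) : π (x ^ n) = e := by
  obtain ⟨n, rfl⟩ := Nat.exists_eq_add_of_lt hn
  rw [map_pow, hx, Nat.zero_add, he.pow_succ_eq]

/-- Let `π : N → M` be a surjective morphism of finite monoids, `P ⊆ M` and
`Q = π⁻¹(P)`. For every `m ≥ 1`, `M` contains a `P`-chain of idempotents of
length `m` iff `N` contains a `Q`-chain of idempotents of length `m`. -/
theorem idemChain_iff_of_surjective {M N : Type*} [Monoid M] [Fintype M]
    [Monoid N] [Fintype N] (π : N →* M) (hπ : Function.Surjective π)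
    (P : Set M) (Q : Set N) (hQ : Q = π ⁻¹' P) :
    ∀ m : ℕ, 1 ≤ m →
      ((∃ e : ℕ → M, IdemChain P e m) ↔ (∃ f : ℕ → N, IdemChain Q f m)) := by
  intro m hm
  constructor
  · rintro ⟨e, h0, hidem, hle, hmem, halt⟩
    have main : ∀ d, d < m → ∃ f : ℕ → N,
        (∀ i, m - 1 - d ≤ i → i < m → π (f i) = e i ∧ IsIdempotentElem (f i)) ∧
        (∀ i, m - 1 - d ≤ i → i + 1 < m → leJ (f i) (f (i + 1))) := by
      intro d
      induction d with
      | zero =>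
          intro _
          obtain ⟨x, hx⟩ := hπ (e (m - 1))
          obtain ⟨n, hn, hxn⟩ := exists_idem_pow x
          refine ⟨fun _ => x ^ n, fun i h1 h2 => ?_, fun i h1 h2 => by omega⟩
          have : i = m - 1 := by omega
          subst this
          exact ⟨map_idem_pow π x hx (hidem _ (by omega)) hn, hxn⟩
      | succ d ih =>
          intro hd
          obtain ⟨f, hf1, hf2⟩ := ih (by omega)
          set k := m - 1 - (d + 1) with hkdef
          have hk1 : k + 1 = m - 1 - d := by omega
          have hk1m : k + 1 < m := by omega
          obtain ⟨u, v, huv⟩ := hle k hk1m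
          obtain ⟨u', hu'⟩ := hπ u
          obtain ⟨v', hv'⟩ := hπ v
          set a := u' * f (k + 1) * v' with ha
          have hπa : π a = e k := by
            have := (hf1 (k + 1) (by omega) (by omega)).1
            rw [ha, map_mul, map_mul, hu', hv', this, ← huv]
          obtain ⟨n, hn, han⟩ := exists_idem_pow a
          refine ⟨Function.update f k (a ^ n), ?_, ?_⟩
          · intro i h1 h2
            rcases eq_or_ne i k with rfl | hik
            · rw [Function.update_self]
              exact ⟨map_idem_pow π a hπa (hidem _ (by omega)) hn, han⟩
            · rw [Function.update_of_ne hik]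
              exact hf1 i (by omega) h2
          · intro i h1 h2
            rcases eq_or_ne i k with rfl | hik
            · rw [Function.update_self, Function.update_of_ne (by omega)]
              obtain ⟨n, rfl⟩ := Nat.exists_eq_add_of_lt hn
              exact ⟨a ^ n * u', v', by simp [pow_succ, ha, mul_assoc]⟩
            · rw [Function.update_of_ne hik, Function.update_of_ne (by omega)]
              exact hf2 i (by omega) h2
    obtain ⟨f, hf1, hf2⟩ := main (m - 1) (by omega)
    refine ⟨f, h0, fun i hi => (hf1 i (by omega) hi).2, fun i hi => hf2 i (by omega) hi, ?_, ?_⟩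
    · rw [hQ, Set.mem_preimage, (hf1 0 (by omega) (by omega)).1]; exact hmem
    · intro i hi1 hi2
      rw [hQ, Set.mem_preimage, Set.mem_preimage, (hf1 i (by omega) hi2).1,
        (hf1 (i - 1) (by omega) (by omega)).1]
      exact halt i hi1 hi2
  · rintro ⟨f, h0, hidem, hle, hmem, halt⟩
    refine ⟨fun i => π (f i), h0, ?_, ?_, ?_, ?_⟩
    · intro i hi
      have := hidem i hi
      unfold IsIdempotentElem at *
      rw [← map_mul, this]
    · rintro i hi
      obtain ⟨u, v, huv⟩ := hle i hi
      exact ⟨π u, π v, by simp [huv]⟩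
    · rw [hQ] at hmem; exact hmem
    · intro i h1 h2
      have := halt i h1 h2
      rw [hQ] at this; exact this
end

section
/- Let M and N be monoids, P ⊆ M, Q ⊆ N, and let T = (P × (N ∖ Q)) ∪ ((M ∖ P) × Q) ⊆ M × N. If the product monoid M × N contains a T-chain of idempotents of length m, then there exist integers p, q ≥ 0 with m ≤ p + q such that M contains a P-chain of idempotents of length p (or p = 0) and N contains a Q-chain of idempotents of length q (or q = 0). -/
lemma leJ_refl {M : Type*} [Monoid M] (s : M) : leJ s s :=
  ⟨1, 1, by simp⟩

lemma leJ_trans {M : Type*} [Monoid M] {s t r : M} (h1 : leJ s t) (h2 : leJ t r) :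
    leJ s r := by
  obtain ⟨u, v, h1⟩ := h1
  obtain ⟨u', v', h2⟩ := h2
  exact ⟨u * u', v' * v, by rw [h1, h2]; simp [mul_assoc]⟩

lemma leJ_fst {M N : Type*} [Monoid M] [Monoid N] {s t : M × N} (h : leJ s t) :
    leJ s.1 t.1 := by
  obtain ⟨u, v, h⟩ := h
  exact ⟨u.1, v.1, by simp [h]⟩

lemma leJ_snd {M N : Type*} [Monoid M] [Monoid N] {s t : M × N} (h : leJ s t) :
    leJ s.2 t.2 := by
  obtain ⟨u, v, h⟩ := h
  exact ⟨u.2, v.2, by simp [h]⟩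

lemma isIdem_fst {M N : Type*} [Monoid M] [Monoid N] {s : M × N}
    (h : IsIdempotentElem s) : IsIdempotentElem s.1 :=
  congrArg Prod.fst h

lemma isIdem_snd {M N : Type*} [Monoid M] [Monoid N] {s : M × N}
    (h : IsIdempotentElem s) : IsIdempotentElem s.2 :=
  congrArg Prod.snd h

/-- A singleton chain. -/
lemma chain_single {M : Type*} [Monoid M] {S : Set M} {c : M}
    (hc : IsIdempotentElem c) (hm : c ∈ S) :
    ∃ a, IdemChain S a 1 ∧ a 0 = c := by
  refine ⟨fun _ => c, ⟨Nat.one_pos, fun i _ => hc, fun i hi => by omega,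
    hm, fun i hi hi' => by omega⟩, rfl⟩

/-- Prepend two elements (one in `S`, the next out of `S`) to a chain. -/
lemma chain_prepend {M : Type*} [Monoid M] {S : Set M} {c0 c1 : M}
    (h0 : IsIdempotentElem c0) (h1 : IsIdempotentElem c1)
    (hm0 : c0 ∈ S) (hm1 : c1 ∉ S) (h01 : leJ c0 c1) {p : ℕ}
    (h : p = 0 ∨ ∃ a, IdemChain S a p ∧ leJ c1 (a 0)) :
    ∃ a, IdemChain S a (p + 2) ∧ a 0 = c0 := by
  rcases h with rfl | ⟨a, ⟨hpos, hidem, hle, hmem, halt⟩, hlink⟩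
  · refine ⟨fun i => if i = 0 then c0 else c1, ⟨by omega, ?_, ?_, by simp [hm0], ?_⟩, rfl⟩
    · intro i hi
      match i with
      | 0 => simpa
      | 1 => simpa
    · intro i hi
      have : i = 0 := by omega
      subst this; simpa using h01
    · intro i hi hi'
      have : i = 1 := by omega
      subst this
      simp only [if_neg one_ne_zero, if_pos rfl]
      constructor
      · intro h; exact absurd h hm1
      · intro h; exact absurd hm0 h
  · refine ⟨fun i => if i = 0 then c0 else if i = 1 then c1 else a (i - 2),
      ⟨by omega, ?_, ?_, by simp [hm0], ?_⟩, rfl⟩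
    · intro i hi
      match i with
      | 0 => simpa
      | 1 => simpa
      | (j+2) => simpa using hidem j (by omega)
    · intro i hi
      match i with
      | 0 => simpa using h01
      | 1 => simpa using hlink
      | (j+2) =>
        have := hle j (by omega)
        simpa using this
    · intro i hi hi'
      match i with
      | 1 =>
        simp only [if_neg one_ne_zero, if_pos rfl, Nat.sub_self, if_pos rfl]
        constructor
        · intro h; exact absurd h hm1
        · intro h; exact absurd hm0 h
      | 2 =>
        simp only [show (2:ℕ) ≠ 0 by omega, show (2:ℕ) ≠ 1 by omega,
          if_neg, if_pos rfl]
        simp only [show (2:ℕ) - 1 = 1 by omega, if_neg one_ne_zero, if_pos rfl,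
          show (2:ℕ) - 2 = 0 by omega]
        constructor
        · intro _; exact hm1
        · intro _; exact hmem
      | (j+3) =>
        have := halt (j + 1) (by omega) (by omega)
        simp only [show j+3 ≠ 0 by omega, show j+3 ≠ 1 by omega, if_neg,
          show j+3-1 = j+2 by omega, show j+2 ≠ 0 by omega, show j+2 ≠ 1 by omega,
          show j+3-2 = j+1 by omega, show j+2-2 = j by omega,
          not_false_eq_true] at *
        simpa [show j+1-1 = j by omega] using this

lemma main_aux {M N : Type*} [Monoid M] [Monoid N] (P : Set M) (Q : Set N)
    (T : Set (M × N))
    (hmem : ∀ z : M × N, z ∈ T ↔ ((z.1 ∈ P ∧ z.2 ∉ Q) ∨ (z.1 ∉ P ∧ z.2 ∈ Q))) :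
    ∀ m, ∀ e : ℕ → M × N, IdemChain T e m →
      ∃ p q : ℕ, m ≤ p + q ∧
        (p = 0 ∨ ∃ a : ℕ → M, IdemChain P a p ∧ leJ (e 0).1 (a 0)) ∧
        (q = 0 ∨ ∃ b : ℕ → N, IdemChain Q b q ∧ leJ (e 0).2 (b 0)) := by
  intro m
  induction m using Nat.strong_induction_on with
  | _ m IH =>
    intro e he
    obtain ⟨hpos, hidem, hle, hmem0, halt⟩ := he
    match m with
    | 0 => omega
    | 1 =>
      rcases (hmem (e 0)).mp hmem0 with ⟨hx, hy⟩ | ⟨hx, hy⟩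
      · obtain ⟨a, ha, ha0⟩ := chain_single (isIdem_fst (hidem 0 (by omega))) hx
        exact ⟨1, 0, le_refl _, Or.inr ⟨a, ha, ha0 ▸ leJ_refl _⟩, Or.inl rfl⟩
      · obtain ⟨b, hb, hb0⟩ := chain_single (isIdem_snd (hidem 0 (by omega))) hy
        exact ⟨0, 1, le_refl _, Or.inl rfl, Or.inr ⟨b, hb, hb0 ▸ leJ_refl _⟩⟩
    | 2 =>
      have hnm1 : e 1 ∉ T := by
        have := halt 1 (by omega) (by omega)
        simp at this
        exact fun h => (this.mp h) hmem0
      have hz1 : ((e 1).1 ∈ P ↔ (e 1).2 ∈ Q) := by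
        constructor
        · intro h1; by_contra h2; exact hnm1 ((hmem (e 1)).mpr (Or.inl ⟨h1, h2⟩))
        · intro h2; by_contra h1; exact hnm1 ((hmem (e 1)).mpr (Or.inr ⟨h1, h2⟩))
      have hid0 := hidem 0 (by omega)
      have hid1 := hidem 1 (by omega)
      have hs01 := hle 0 (by omega)
      rcases (hmem (e 0)).mp hmem0 with ⟨hx0, hy0⟩ | ⟨hx0, hy0⟩
      · by_cases hx1 : (e 1).1 ∈ P
        · -- x: T T, so y1 = T : P gets [e0.1], Q gets [e1.2]
          obtain ⟨a, ha, ha0⟩ := chain_single (isIdem_fst hid0) hx0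
          obtain ⟨b, hb, hb0⟩ := chain_single (isIdem_snd hid1) (hz1.mp hx1)
          exact ⟨1, 1, le_refl _, Or.inr ⟨a, ha, ha0 ▸ leJ_refl _⟩,
            Or.inr ⟨b, hb, hb0 ▸ leJ_snd hs01⟩⟩
        · -- x: T F : P gets [e0.1, e1.1]
          obtain ⟨a, ha, ha0⟩ := chain_prepend (isIdem_fst hid0) (isIdem_fst hid1)
            hx0 hx1 (leJ_fst hs01) (Or.inl rfl)
          exact ⟨2, 0, le_refl _, Or.inr ⟨a, ha, ha0 ▸ leJ_refl _⟩, Or.inl rfl⟩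
      · by_cases hy1 : (e 1).2 ∈ Q
        · -- y: T T, x1 = T
          obtain ⟨a, ha, ha0⟩ := chain_single (isIdem_fst hid1) (hz1.mpr hy1)
          obtain ⟨b, hb, hb0⟩ := chain_single (isIdem_snd hid0) hy0
          exact ⟨1, 1, le_refl _, Or.inr ⟨a, ha, ha0 ▸ leJ_fst hs01⟩,
            Or.inr ⟨b, hb, hb0 ▸ leJ_refl _⟩⟩
        · -- y: T F : Q gets [e0.2, e1.2]
          obtain ⟨b, hb, hb0⟩ := chain_prepend (isIdem_snd hid0) (isIdem_snd hid1)
            hy0 hy1 (leJ_snd hs01) (Or.inl rfl)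
          exact ⟨0, 2, le_refl _, Or.inl rfl, Or.inr ⟨b, hb, hb0 ▸ leJ_refl _⟩⟩
    | (k+3) =>
      -- step case: m = k+3, shifted chain has length k+1 ≥ 1
      have hnm1 : e 1 ∉ T := by
        have := halt 1 (by omega) (by omega)
        simp at this
        exact fun h => (this.mp h) hmem0
      have hm2 : e 2 ∈ T := by
        have := halt 2 (by omega) (by omega)
        simp at this
        exact this.mpr hnm1
      have he' : IdemChain T (fun i => e (i + 2)) (k + 1) := by
        refine ⟨by omega, fun i hi => hidem (i+2) (by omega),
          fun i hi => hle (i+2) (by omega), hm2, fun i hi hi' => ?_⟩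
        have := halt (i+2) (by omega) (by omega)
        simpa [show i+2-1 = i-1+2 by omega] using this
      obtain ⟨p, q, hpq, hP, hQ⟩ := IH (k+1) (by omega) _ he'
      have hid0 := hidem 0 (by omega)
      have hid1 := hidem 1 (by omega)
      have hid2 := hidem 2 (by omega)
      have hs01 := hle 0 (by omega)
      have hs12 := hle 1 (by omega)
      have hs02 := leJ_trans hs01 hs12
      have hz1 : ((e 1).1 ∈ P ↔ (e 1).2 ∈ Q) := by
        constructor
        · intro h1; by_contra h2; exact hnm1 ((hmem (e 1)).mpr (Or.inl ⟨h1, h2⟩))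
        · intro h2; by_contra h1; exact hnm1 ((hmem (e 1)).mpr (Or.inr ⟨h1, h2⟩))
      -- key: find two elements to prepend on one side
      have key :
          (∃ c0 c1 : M, IsIdempotentElem c0 ∧ IsIdempotentElem c1 ∧ c0 ∈ P ∧ c1 ∉ P ∧
            leJ c0 c1 ∧ leJ c1 (e 2).1 ∧ leJ (e 0).1 c0) ∨
          (∃ c0 c1 : N, IsIdempotentElem c0 ∧ IsIdempotentElem c1 ∧ c0 ∈ Q ∧ c1 ∉ Q ∧
            leJ c0 c1 ∧ leJ c1 (e 2).2 ∧ leJ (e 0).2 c0) := by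
        rcases (hmem (e 0)).mp hmem0 with ⟨hx0, hy0⟩ | ⟨hx0, hy0⟩
        · by_cases hx2 : (e 2).1 ∈ P
          · by_cases hx1 : (e 1).1 ∈ P
            · -- x: T T T, y: F T F
              have hy2 : (e 2).2 ∉ Q := by
                rcases (hmem (e 2)).mp hm2 with ⟨_, h⟩ | ⟨h, _⟩
                · exact h
                · exact absurd hx2 h
              exact Or.inr ⟨(e 1).2, (e 2).2, isIdem_snd hid1, isIdem_snd hid2,
                hz1.mp hx1, hy2, leJ_snd hs12, leJ_refl _, leJ_snd hs01⟩
            · -- x: T F T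
              exact Or.inl ⟨(e 0).1, (e 1).1, isIdem_fst hid0, isIdem_fst hid1,
                hx0, hx1, leJ_fst hs01, leJ_fst hs12, leJ_refl _⟩
          · -- x: T _ F
            exact Or.inl ⟨(e 0).1, (e 2).1, isIdem_fst hid0, isIdem_fst hid2,
              hx0, hx2, leJ_fst hs02, leJ_refl _, leJ_refl _⟩
        · by_cases hx2 : (e 2).1 ∈ P
          · -- x: F _ T, y: T _ F
            have hy2 : (e 2).2 ∉ Q := by
              rcases (hmem (e 2)).mp hm2 with ⟨_, h⟩ | ⟨h, _⟩
              · exact h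
              · exact absurd hx2 h
            exact Or.inr ⟨(e 0).2, (e 2).2, isIdem_snd hid0, isIdem_snd hid2,
              hy0, hy2, leJ_snd hs02, leJ_refl _, leJ_refl _⟩
          · by_cases hx1 : (e 1).1 ∈ P
            · -- x: F T F
              exact Or.inl ⟨(e 1).1, (e 2).1, isIdem_fst hid1, isIdem_fst hid2,
                hx1, hx2, leJ_fst hs12, leJ_refl _, leJ_fst hs01⟩
            · -- x: F F F, y: T F T
              exact Or.inr ⟨(e 0).2, (e 1).2, isIdem_snd hid0, isIdem_snd hid1,
                hy0, fun h => hx1 (hz1.mpr h), leJ_snd hs01, leJ_snd hs12, leJ_refl _⟩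
      rcases key with ⟨c0, c1, hc0, hc1, hcm0, hcm1, hc01, hc1e, hec0⟩ |
        ⟨c0, c1, hc0, hc1, hcm0, hcm1, hc01, hc1e, hec0⟩
      · have hP' : p = 0 ∨ ∃ a, IdemChain P a p ∧ leJ c1 (a 0) := by
          rcases hP with h | ⟨a, ha, hla⟩
          · exact Or.inl h
          · exact Or.inr ⟨a, ha, leJ_trans hc1e hla⟩
        obtain ⟨a, ha, ha0⟩ := chain_prepend hc0 hc1 hcm0 hcm1 hc01 hP'
        refine ⟨p + 2, q, by omega, Or.inr ⟨a, ha, ha0 ▸ hec0⟩, ?_⟩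
        rcases hQ with h | ⟨b, hb, hlb⟩
        · exact Or.inl h
        · exact Or.inr ⟨b, hb, leJ_trans (leJ_snd hs02) hlb⟩
      · have hQ' : q = 0 ∨ ∃ b, IdemChain Q b q ∧ leJ c1 (b 0) := by
          rcases hQ with h | ⟨b, hb, hlb⟩
          · exact Or.inl h
          · exact Or.inr ⟨b, hb, leJ_trans hc1e hlb⟩
        obtain ⟨b, hb, hb0⟩ := chain_prepend hc0 hc1 hcm0 hcm1 hc01 hQ'
        refine ⟨p, q + 2, by omega, ?_, Or.inr ⟨b, hb, hb0 ▸ hec0⟩⟩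
        rcases hP with h | ⟨a, ha, hla⟩
        · exact Or.inl h
        · exact Or.inr ⟨a, ha, leJ_trans (leJ_fst hs02) hla⟩

/-- Let `T = (P × (N ∖ Q)) ∪ ((M ∖ P) × Q)` in the product monoid `M × N`. If
`M × N` contains a `T`-chain of idempotents of length `m`, then there are
`p, q ≥ 0` with `m ≤ p + q` such that `M` contains a `P`-chain of idempotents of
length `p` (or `p = 0`) and `N` contains a `Q`-chain of idempotents of length
`q` (or `q = 0`). -/
theorem idemChain_symmDiff_split {M N : Type*} [Monoid M] [Monoid N]
    (P : Set M) (Q : Set N) (T : Set (M × N))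
    (hT : T = (P ×ˢ Qᶜ) ∪ (Pᶜ ×ˢ Q))
    (m : ℕ) (e : ℕ → M × N) (he : IdemChain T e m) :
    ∃ p q : ℕ, m ≤ p + q ∧
      (p = 0 ∨ ∃ a : ℕ → M, IdemChain P a p) ∧
      (q = 0 ∨ ∃ b : ℕ → N, IdemChain Q b q) := by
  have hmem : ∀ z : M × N, z ∈ T ↔ ((z.1 ∈ P ∧ z.2 ∉ Q) ∨ (z.1 ∉ P ∧ z.2 ∈ Q)) := by
    subst hT
    intro z
    simp [Set.mem_prod]
  obtain ⟨p, q, hpq, hP, hQ⟩ := main_aux P Q T hmem m e he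
  refine ⟨p, q, hpq, ?_, ?_⟩
  · rcases hP with h | ⟨a, ha, _⟩
    · exact Or.inl h
    · exact Or.inr ⟨a, ha⟩
  · rcases hQ with h | ⟨b, hb, _⟩
    · exact Or.inl h
    · exact Or.inr ⟨b, hb⟩
end

section
/- Let M be a finite monoid and let P ⊆ M be closed under conjugation, i.e., for all x, y ∈ M, xy ∈ P if and only if yx ∈ P. Then every P-chain of idempotents e₀ ≤_J e₁ ≤_J ⋯ ≤_J e_{m−1} in M is strictly increasing for the J-preorder: for each 0 ≤ i < m − 1, it is not the case that e_{i+1} ≤_J e_i. -/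
/-- In a finite monoid, some positive power of every element is idempotent. -/
lemma exists_pow_idem {M : Type*} [Monoid M] [Fintype M] (a : M) :
    ∃ n, 0 < n ∧ IsIdempotentElem (a ^ n) := by
  obtain ⟨m, n, hmn, heq⟩ := Finite.exists_ne_map_eq_of_infinite (fun n : ℕ => a ^ n)
  wlog hlt : m < n generalizing m n
  · exact this n m hmn.symm heq.symm (by omega)
  set k := n - m with hk
  have hk1 : 0 < k := by omega
  have hbase : a ^ (m + k) = a ^ m := by
    have : m + k = n := by omega
    rw [this]; exact heq.symm
  have hstep : ∀ s, m ≤ s → a ^ (s + k) = a ^ s := by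
    intro s hs
    have h1 : s + k = (m + k) + (s - m) := by omega
    have h2 : s = m + (s - m) := by omega
    rw [h1, pow_add, hbase, ← pow_add, ← h2]
  have hjump : ∀ j s, m ≤ s → a ^ (s + j * k) = a ^ s := by
    intro j
    induction j with
    | zero => simp
    | succ j ih =>
      intro s hs
      have : s + (j + 1) * k = (s + k) + j * k := by ring
      rw [this, ih (s + k) (by omega), hstep s hs]
  refine ⟨k * (m + 1), by positivity, ?_⟩
  show a ^ (k * (m + 1)) * a ^ (k * (m + 1)) = a ^ (k * (m + 1))
  rw [← pow_add]
  have h1 : k * (m + 1) + k * (m + 1) = k * (m + 1) + (m + 1) * k := by ring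
  rw [h1, hjump (m + 1) (k * (m + 1)) (by nlinarith)]

/-- Stability: if `x = u * (x * y) * v` then `x ∈ (x*y) M`. -/
lemma stab {M : Type*} [Monoid M] [Fintype M] {x y u v : M}
    (h : x = u * (x * y) * v) : ∃ w, x = (x * y) * w := by
  have hq : x = u * x * (y * v) := by
    conv_lhs => rw [h]
    simp [mul_assoc]
  have key : ∀ n, x = u ^ n * x * (y * v) ^ n := by
    intro n
    induction n with
    | zero => simp
    | succ n ih =>
      calc x = u * x * (y * v) := hq
        _ = u * (u ^ n * x * (y * v) ^ n) * (y * v) := by rw [← ih]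
        _ = u ^ (n + 1) * x * (y * v) ^ (n + 1) := by
            rw [pow_succ', pow_succ]; simp [mul_assoc]
  obtain ⟨n, hn, hid⟩ := exists_pow_idem u
  have h1 : u ^ n * x = x := by
    calc u ^ n * x = u ^ n * (u ^ n * x * (y * v) ^ n) := by rw [← key n]
      _ = (u ^ n * u ^ n) * x * (y * v) ^ n := by simp [mul_assoc]
      _ = u ^ n * x * (y * v) ^ n := by rw [hid]
      _ = x := (key n).symm
  have h2 : x = x * (y * v) ^ n := by
    calc x = u ^ n * x * (y * v) ^ n := key n
      _ = x * (y * v) ^ n := by rw [h1]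
  obtain ⟨n', rfl⟩ : ∃ n', n = n' + 1 := ⟨n - 1, by omega⟩
  refine ⟨v * (y * v) ^ n', ?_⟩
  calc x = x * (y * v) ^ (n' + 1) := h2
    _ = x * ((y * v) * (y * v) ^ n') := by rw [pow_succ']
    _ = (x * y) * (v * (y * v) ^ n') := by simp [mul_assoc]

/-- Key lemma: J-equivalent idempotents are simultaneously in or out of a
conjugation-closed set `P`. -/
lemma key_lemma {M : Type*} [Monoid M] [Fintype M] (P : Set M)
    (hconj : ∀ x y : M, x * y ∈ P ↔ y * x ∈ P) {E F : M}
    (hE : IsIdempotentElem E) (hF : IsIdempotentElem F)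
    (h1 : leJ E F) (h2 : leJ F E) : (E ∈ P ↔ F ∈ P) := by
  obtain ⟨u, v, huv⟩ := h1
  obtain ⟨x, y, hxy⟩ := h2
  set t := E * u * F with ht
  set s := F * v * E with hs
  have hEE : E * E = E := hE
  have hFF : F * F = F := hF
  have hts : t * s = E := by
    calc t * s = E * (u * (F * F) * v) * E := by simp [ht, hs, mul_assoc]
      _ = E * (u * F * v) * E := by rw [hFF]
      _ = E := by rw [← huv, hEE, hEE]
  set g := s * t with hg
  -- E ∈ P ↔ g ∈ P
  have hPg : E ∈ P ↔ g ∈ P := by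
    rw [← hts, hconj t s, ← hg]
  -- g is idempotent
  have hgg : g * g = g := by
    calc g * g = s * (t * s) * t := by simp [hg, mul_assoc]
      _ = s * E * t := by rw [hts]
      _ = (F * v * (E * E)) * t := by simp [hs, mul_assoc]
      _ = s * t := by rw [hEE, hs]
      _ = g := hg.symm
  -- F * g = g and g * F = g
  have hFg : F * g = g := by
    calc F * g = (F * F) * v * E * t := by simp [hg, hs, mul_assoc]
      _ = F * v * E * t := by rw [hFF]
      _ = g := by rw [hg, hs]
  have hgF : g * F = g := by
    calc g * F = s * (E * u * (F * F)) := by simp [hg, ht, mul_assoc]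
      _ = s * (E * u * F) := by rw [hFF]
      _ = g := by rw [hg, ht]
  -- E = t * g * s
  have hEg : E = t * (g * s) := by
    calc E = E * E := hEE.symm
      _ = (t * s) * (t * s) := by rw [hts]
      _ = t * (g * s) := by simp [hg, mul_assoc]
  -- F = (x * t) * (F * g) * (s * y)
  have hFgJ : F = (x * t) * (F * g) * (s * y) := by
    rw [hFg]
    calc F = x * E * y := hxy
      _ = x * (t * (g * s)) * y := by rw [← hEg]
      _ = x * t * g * (s * y) := by simp [mul_assoc]
  obtain ⟨w, hw⟩ := stab hFgJ
  -- F = (F * g) * w = g * w, then g = g * F = g * g * w = g * w = F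
  have hFgw : F = g * w := by rw [hw, hFg]
  have : g = F := by
    calc g = g * F := hgF.symm
      _ = g * (g * w) := by rw [← hFgw]
      _ = (g * g) * w := by simp [hg, mul_assoc]
      _ = g * w := by rw [hgg]
      _ = F := hFgw.symm
  rw [hPg, this]

/-- In a finite monoid, if `P` is closed under conjugation (`xy ∈ P ↔ yx ∈ P`),
then every `P`-chain of idempotents is strictly increasing for the
`J`-preorder. -/
theorem idemChain_strict {M : Type*} [Monoid M] [Fintype M]
    (P : Set M) (hconj : ∀ x y : M, x * y ∈ P ↔ y * x ∈ P)
    (e : ℕ → M) (m : ℕ) (h : IdemChain P e m) :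
    ∀ i, i + 1 < m → ¬ leJ (e (i + 1)) (e i) := by
  obtain ⟨hm, hidem, hchain, h0, halt⟩ := h
  intro i hi hcontra
  have hE : IsIdempotentElem (e i) := hidem i (by omega)
  have hF : IsIdempotentElem (e (i + 1)) := hidem (i + 1) hi
  have hiff := key_lemma P hconj hE hF (hchain i hi) hcontra
  have := halt (i + 1) (by omega) hi
  simp only [Nat.add_sub_cancel] at this
  tauto
end
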